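/- Let N be a binary normal network on X and let a, b be distinct elements of X. Then {a,b} is a cherry of N if and only if for every rooted triple xy|z displayed by N with a, b ∈ {x,y,z}, we have {a,b} = {x,y}. -/

import Mathlib

/-- A (candidate) rooted phylogenetic network structure: a directed graph on a
vertex type `V` with a distinguished root and a labelling of (intended) leaves
by elements of `X`.  The combinatorial axioms are imposed by predicates below. -/
structure Network (X : Type) where
  V : Type
  arc : V → V → Prop
  root : V
  leaf : X → V

namespace Network

variable {X : Type} (N : Network X)

def parents (v : N.V) : Set N.V := {u | N.arc u v}

def children (u : N.V) : Set N.V := {v | N.arc u v}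

/-- in-degree 1, out-degree 2 -/
def IsTreeVertex (v : N.V) : Prop := (N.parents v).ncard = 1 ∧ (N.children v).ncard = 2

/-- in-degree 2, out-degree 1 -/
def IsRetic (v : N.V) : Prop := (N.parents v).ncard = 2 ∧ (N.children v).ncard = 1

/-- in-degree 1, out-degree 0 -/
def IsLeafVertex (v : N.V) : Prop := (N.parents v).ncard = 1 ∧ (N.children v).ncard = 0

def Acyclic : Prop := ∀ v : N.V, ¬ Relation.TransGen N.arc v v

/-- A well-formed binary phylogenetic network (non-degenerate case): a finite
acyclic digraph with a root of in-degree 0 and out-degree 2, leaves of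
in-degree 1 and out-degree 0 bijectively labelled by `X`, and all remaining
vertices tree vertices or reticulations. -/
def Wf : Prop :=
  Finite N.V ∧ N.Acyclic ∧
  (N.parents N.root).ncard = 0 ∧ (N.children N.root).ncard = 2 ∧
  Function.Injective N.leaf ∧
  (∀ x : X, N.IsLeafVertex (N.leaf x)) ∧
  (∀ v : N.V, v = N.root ∨ (∃ x, N.leaf x = v) ∨ N.IsTreeVertex v ∨ N.IsRetic v)

/-- The degenerate network on a single leaf: one vertex, no arcs. -/
def Degenerate : Prop :=
  (∀ v : N.V, v = N.root) ∧ (∀ u v : N.V, ¬ N.arc u v) ∧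
  (∃! _x : X, True) ∧ (∀ x : X, N.leaf x = N.root)

def IsBinaryPhylo : Prop := N.Wf ∨ N.Degenerate

/-- `l` is a directed path (a list of successively adjacent vertices) from `u` to `v`. -/
def IsPathFromTo (l : List N.V) (u v : N.V) : Prop :=
  l.Chain' N.arc ∧ l.head? = some u ∧ l.getLast? = some v

/-- `v` is a descendant of `u` (equivalently, `u` is an ancestor of `v`). -/
def Desc (u v : N.V) : Prop := Relation.ReflTransGen N.arc u v

/-- The visibility set of `u`: those leaf labels `x` such that every directed
path from the root to the leaf labelled `x` traverses `u`. -/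
def visSet (u : N.V) : Set X :=
  {x | ∀ l : List N.V, N.IsPathFromTo l N.root (N.leaf x) → u ∈ l}

/-- The cluster set of `u`: leaf labels of leaves that are descendants of `u`. -/
def cluster (u : N.V) : Set X := {x | N.Desc u (N.leaf x)}

/-- A tree path from `u` to `t`: a directed path whose vertices other than the
endpoints are tree vertices. -/
def IsTreePath (l : List N.V) (u t : N.V) : Prop :=
  N.IsPathFromTo l u t ∧ ∀ v ∈ l, v ≠ u → v ≠ t → N.IsTreeVertex v

/-- Tree-child: every vertex with a child has a child that is a tree vertex or a leaf. -/
def TreeChild : Prop :=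
  ∀ v : N.V, (∃ c, N.arc v c) → ∃ c, N.arc v c ∧ (N.IsTreeVertex c ∨ N.IsLeafVertex c)

/-- Some reticulation arc `(u,v)` is a shortcut: there is a directed path from
`u` to `v` avoiding the arc `(u,v)`. -/
def HasShortcut : Prop :=
  ∃ u v, N.arc u v ∧ N.IsRetic v ∧ ∃ w, N.arc u w ∧ w ≠ v ∧ N.Desc w v

/-- Normal: tree-child with no shortcuts. -/
def IsNormal : Prop := N.TreeChild ∧ ¬ N.HasShortcut

def SiblingRetics (u v : N.V) : Prop :=
  u ≠ v ∧ N.IsRetic u ∧ N.IsRetic v ∧ ∃ p, N.arc p u ∧ N.arc p v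

def StackRetics (u v : N.V) : Prop :=
  N.IsRetic u ∧ N.IsRetic v ∧ N.arc u v

/-- `u` and `v` are near-sibling reticulations: some tree vertex `t` has as its
two children `v` and a tree vertex `s` that is a parent of `u`. -/
def NearSiblingRetics (u v : N.V) : Prop :=
  u ≠ v ∧ N.IsRetic u ∧ N.IsRetic v ∧
  ∃ t s, N.IsTreeVertex t ∧ N.IsTreeVertex s ∧ N.arc t s ∧ N.arc t v ∧ N.arc s u

/-- `u` and `v` are near-stack reticulations: the child of `u` is a tree vertex
that is a parent of `v`. -/
def NearStackRetics (u v : N.V) : Prop :=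
  N.IsRetic u ∧ N.IsRetic v ∧ ∃ s, N.arc u s ∧ N.IsTreeVertex s ∧ N.arc s v

def NoNearRetics : Prop :=
  (∀ u v, ¬ N.NearSiblingRetics u v) ∧ (∀ u v, ¬ N.NearStackRetics u v)

/-- `{a,b}` is a cherry: the leaves labelled `a` and `b` share a parent. -/
def Cherry (a b : X) : Prop :=
  a ≠ b ∧ ∃ p, N.arc p (N.leaf a) ∧ N.arc p (N.leaf b)

/-- `{a,b}` is a reticulated cherry with reticulation leaf `b`. -/
def ReticCherry (a b : X) : Prop :=
  a ≠ b ∧ ∃ pa pb, N.arc pa (N.leaf a) ∧ N.arc pb (N.leaf b) ∧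
    N.IsRetic pb ∧ N.arc pa pb

/-- `N` displays the rooted triple `xy|z`: there is a subdigraph of `N` that
is a subdivision of the rooted triple tree with `z` adjacent to the root,
i.e. vertices `p` (the root image) and `q` (the image of the parent of `x,y`)
together with internally disjoint directed paths as below. -/
def Displays (x y z : X) : Prop :=
  x ≠ y ∧ x ≠ z ∧ y ≠ z ∧
  ∃ (p q : N.V) (l0 lx ly lz : List N.V),
    p ≠ q ∧
    N.IsPathFromTo l0 p q ∧
    N.IsPathFromTo lx q (N.leaf x) ∧
    N.IsPathFromTo ly q (N.leaf y) ∧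
    N.IsPathFromTo lz p (N.leaf z) ∧
    (∀ v ∈ lx, v ∈ ly → v = q) ∧
    (∀ v ∈ l0, v ∈ lx ∨ v ∈ ly → v = q) ∧
    (∀ v ∈ lz, v ∈ l0 ∨ v ∈ lx ∨ v ∈ ly → v = p)

/-- `R(N)`: the set of rooted triples displayed by `N`, encoded as ordered
triples `(x, y, z)` standing for `xy|z`. -/
def RDisp : Set (X × X × X) := {t | N.Displays t.1 t.2.1 t.2.2}

/-- Isomorphism of networks on the same leaf set: a digraph isomorphism fixing
each leaf label. -/
def Isomorphic (N1 N2 : Network X) : Prop :=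
  ∃ φ : N1.V ≃ N2.V,
    (∀ u v, N1.arc u v ↔ N2.arc (φ u) (φ v)) ∧ (∀ x, φ (N1.leaf x) = N2.leaf x)

/-- A candidate set for `b` (relative to `a`): a non-empty subset
`W ⊆ X - {a,b}` satisfying conditions (W1)–(W5). -/
def CandidateSet (a b : X) (W : Set X) : Prop :=
  W.Nonempty ∧ a ∉ W ∧ b ∉ W ∧
  -- (W1)
  (∀ c ∈ W, ∀ x : X, x ∉ W → x ≠ b →
    N.Displays b c x ∧ ¬ N.Displays a c b) ∧
  -- (W2)
  (∀ c ∈ W, ∀ c' ∈ W, c ≠ c' → ¬ N.Displays b c c') ∧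
  -- (W3)
  (∀ c ∈ W, ∀ x : X, x ∉ W → x ≠ a → x ≠ b →
    (N.Displays c x a ↔ N.Displays b x a)) ∧
  -- (W4)
  (∀ x y : X, x ∉ W → x ≠ a → x ≠ b → y ∉ W → y ≠ a → y ≠ b →
    N.Displays b x y → ¬ N.Displays a x y → ∀ c ∈ W, N.Displays c x y) ∧
  -- (W5)
  (∀ c ∈ W, (∀ x : X, x ∉ W → x ≠ a → x ≠ b → N.Displays a c x) →
    ∀ x : X, x ∉ W → x ≠ a → x ≠ b → ¬ N.Displays a x c ∧ ¬ N.Displays a x b)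

end Network

/-! The forward direction only uses that the paths of an embedded triple are internally
disjoint: if `a` and `b` share the parent `w`, then in an embedding of `a y | b` the vertex `w`
lies on the path from the lower split vertex `q` to `a` and on the path from the upper split
vertex `p` to `b`, hence `w = p`, which puts `p` strictly below `q`.

For the converse let `pa ≠ pb` be the parents of `a` and `b`. A triple `x c | z` is displayed as
soon as some vertex `q` that is not an ancestor of `z` has a path to `x` together with a second
child `d` that lies above no vertex of this path: join `q` and `z` through a branch point and
follow any path from `d` down to a leaf `c`. For `x = a` one takes `q = pa` when `pa` is not a
reticulation, and otherwise a parent of `pa`; normality supplies the second child and keeps it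
off the path `q → pa → a`. If no such `q` works, neither for `a` against `b` nor for `b` against
`a`, then every candidate for either leaf is an ancestor of the other leaf, and the absence of
shortcuts and the tree-child property force `pa = pb`. -/

theorem wellFounded_of_forall_not_transGen {α : Type*} [Finite α] {r : α → α → Prop}
    (h : ∀ a, ¬ Relation.TransGen r a a) : WellFounded r :=
  haveI : Std.Irrefl (Relation.TransGen r) := ⟨h⟩
  Subrelation.wf Relation.TransGen.single (Finite.wellFounded_of_trans_of_irrefl _)

namespace Network

variable {X : Type} {N : Network X} {l : List N.V} {u v w : N.V}

theorem isPathFromTo_singleton (u : N.V) : N.IsPathFromTo [u] u u :=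
  ⟨List.isChain_singleton u, rfl, rfl⟩

theorem IsPathFromTo.cons (huv : N.arc u v) (h : N.IsPathFromTo l v w) :
    N.IsPathFromTo (u :: l) u w := by
  obtain ⟨hc, hv, hw⟩ := h
  obtain ⟨l, rfl⟩ : ∃ l', l = v :: l' := List.head?_eq_some_iff.mp hv
  exact ⟨List.IsChain.cons_cons huv hc, rfl, by simpa using hw⟩

theorem exists_isPathFromTo_of_desc (h : N.Desc u v) : ∃ l, N.IsPathFromTo l u v := by
  induction h using Relation.ReflTransGen.head_induction_on with
  | refl => exact ⟨[v], isPathFromTo_singleton v⟩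
  | head huw _ ih =>
    obtain ⟨l, hl⟩ := ih
    exact ⟨_, hl.cons huw⟩

theorem IsPathFromTo.getLast_mem (h : N.IsPathFromTo l u w) : w ∈ l :=
  List.mem_of_getLast? h.2.2

theorem IsPathFromTo.desc_of_mem (h : N.IsPathFromTo l u w) (hv : v ∈ l) :
    N.Desc u v ∧ N.Desc v w := by
  obtain ⟨hc, hu, hw⟩ := h
  refine ⟨hc.induction (N.Desc u ·) l (fun _ _ h₁ h₂ => h₂.tail h₁) (fun hne => ?_) v hv,
    hc.backwards_induction (N.Desc · w) l (fun _ _ h₁ h₂ => h₂.head h₁) (fun hne => ?_) v hv⟩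
  · exact (List.head_eq_iff_head?_eq_some hne).mpr hu ▸ .refl
  · exact List.getLast_of_mem_getLast? hw ▸ .refl

theorem IsPathFromTo.desc (h : N.IsPathFromTo l u w) : N.Desc u w :=
  (h.desc_of_mem h.getLast_mem).1

theorem IsPathFromTo.exists_arc_mem (h : N.IsPathFromTo l u w) (hne : u ≠ w) :
    ∃ m ∈ l, N.arc m w := by
  induction l generalizing u with
  | nil => simp [IsPathFromTo] at h
  | cons a l ih =>
    obtain ⟨hc, hu, hw⟩ := h
    cases l with
    | nil => simp_all
    | cons b l =>
      simp only [List.head?_cons, Option.some.injEq] at hu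
      subst hu
      obtain ⟨hab, hc⟩ := List.isChain_cons_cons.mp hc
      by_cases hbw : b = w
      · exact ⟨a, List.mem_cons_self, hbw ▸ hab⟩
      · obtain ⟨m, hm, hmw⟩ := ih ⟨hc, rfl, by simpa using hw⟩ hbw
        exact ⟨m, List.mem_cons_of_mem a hm, hmw⟩

theorem exists_branch_point {r : N.V} (hu : N.Desc r u) (hv : N.Desc r v) :
    ∃ p l₁ l₂, N.IsPathFromTo l₁ p u ∧ N.IsPathFromTo l₂ p v ∧ ∀ w ∈ l₁, w ∈ l₂ → w = p := by
  induction hu using Relation.ReflTransGen.head_induction_on with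
  | refl =>
    obtain ⟨l₂, hl₂⟩ := exists_isPathFromTo_of_desc hv
    exact ⟨u, [u], l₂, isPathFromTo_singleton u, hl₂, fun w hw _ => List.mem_singleton.mp hw⟩
  | @head r r' hrr' hr'u ih =>
    by_cases hr'v : N.Desc r' v
    · exact ih hr'v
    obtain ⟨l, hl⟩ := exists_isPathFromTo_of_desc hr'u
    obtain ⟨l₂, hl₂⟩ := exists_isPathFromTo_of_desc hv
    -- no vertex of `l` is an ancestor of `v`, since `r'` is not
    refine ⟨r, r :: l, l₂, hl.cons hrr', hl₂, fun w hw hw₂ => ?_⟩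
    rcases List.mem_cons.mp hw with rfl | hw
    · rfl
    · exact absurd ((hl.desc_of_mem hw).1.trans (hl₂.desc_of_mem hw₂).2) hr'v

theorem Acyclic.not_desc_of_arc (hac : N.Acyclic) (h : N.arc u v) : ¬ N.Desc v u :=
  fun h' => hac u (Relation.TransGen.head' h h')

theorem Acyclic.antisymm (hac : N.Acyclic) (huv : N.Desc u v) (hvu : N.Desc v u) : u = v := by
  obtain rfl | ⟨w, huw, hwv⟩ := huv.cases_head
  · rfl
  · exact absurd (hwv.trans hvu) (hac.not_desc_of_arc huw)

section Degrees

variable [Finite N.V]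

theorem IsLeafVertex.not_arc (h : N.IsLeafVertex v) (w : N.V) : ¬ N.arc v w :=
  fun hw => (Set.ncard_eq_zero (Set.toFinite _)).mp h.2 |>.subset hw

theorem IsLeafVertex.eq_of_arc (h : N.IsLeafVertex w) (hu : N.arc u w) (hv : N.arc v w) :
    u = v :=
  (Set.ncard_le_one_iff (Set.toFinite _)).mp h.1.le hu hv

theorem IsRetic.eq_of_arc {c₁ c₂ : N.V} (h : N.IsRetic v) (h₁ : N.arc v c₁) (h₂ : N.arc v c₂) :
    c₁ = c₂ :=
  (Set.ncard_le_one_iff (Set.toFinite _)).mp h.2.le h₁ h₂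

end Degrees

theorem IsRetic.exists_parent_ne (h : N.IsRetic v) (u : N.V) : ∃ w, N.arc w v ∧ w ≠ u :=
  Set.exists_ne_of_one_lt_ncard (h.1 ▸ one_lt_two) u

namespace Wf

variable (hwf : N.Wf)
include hwf

theorem acyclic : N.Acyclic :=
  hwf.2.1

theorem isLeafVertex (x : X) : N.IsLeafVertex (N.leaf x) :=
  hwf.2.2.2.2.2.1 x

theorem vertex_cases (v : N.V) :
    v = N.root ∨ (∃ x, N.leaf x = v) ∨ N.IsTreeVertex v ∨ N.IsRetic v :=
  hwf.2.2.2.2.2.2 v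

theorem not_arc_leaf (x : X) (v : N.V) : ¬ N.arc (N.leaf x) v :=
  have : Finite N.V := hwf.1
  (hwf.isLeafVertex x).not_arc v

theorem leaf_ne_of_arc {x : X} (h : N.arc u v) : N.leaf x ≠ u :=
  fun e => hwf.not_arc_leaf x v (e ▸ h)

theorem eq_of_desc_leaf {x : X} (h : N.Desc (N.leaf x) v) : v = N.leaf x := by
  obtain e | ⟨w, hw, -⟩ := h.cases_head
  exacts [e.symm, absurd hw (hwf.not_arc_leaf x w)]

theorem exists_parent_leaf (x : X) : ∃ p, N.arc p (N.leaf x) :=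
  Set.nonempty_of_ncard_ne_zero ((hwf.isLeafVertex x).1 ▸ one_ne_zero)

theorem desc_of_desc_leaf {p : N.V} {x : X} (hp : N.arc p (N.leaf x))
    (h : N.Desc v (N.leaf x)) (hne : v ≠ N.leaf x) : N.Desc v p := by
  have : Finite N.V := hwf.1
  obtain rfl | ⟨m, hvm, hm⟩ := h.cases_tail
  · exact absurd rfl hne
  · exact (hwf.isLeafVertex x).eq_of_arc hm hp ▸ hvm

theorem exists_parent_of_ne_root (hv : v ≠ N.root) : ∃ u, N.arc u v := by
  have : (N.parents v).ncard ≠ 0 := by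
    rcases hwf.vertex_cases v with rfl | ⟨x, rfl⟩ | ht | hr
    exacts [absurd rfl hv, by simp [(hwf.isLeafVertex x).1], by simp [ht.1], by simp [hr.1]]
  exact Set.nonempty_of_ncard_ne_zero this

theorem exists_child_of_forall_leaf_ne (hv : ∀ x, N.leaf x ≠ v) : ∃ w, N.arc v w := by
  have : (N.children v).ncard ≠ 0 := by
    rcases hwf.vertex_cases v with rfl | ⟨x, rfl⟩ | ht | hr
    exacts [by simp [hwf.2.2.2.1], absurd rfl (hv x), by simp [ht.2], by simp [hr.2]]
  exact Set.nonempty_of_ncard_ne_zero this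

theorem ncard_children_eq_two (h : N.arc u v) (hu : ¬ N.IsRetic u) :
    (N.children u).ncard = 2 := by
  rcases hwf.vertex_cases u with rfl | ⟨x, rfl⟩ | ht | hr
  exacts [hwf.2.2.2.1, absurd h (hwf.not_arc_leaf x v), ht.2, absurd hr hu]

theorem exists_child_ne (h : N.arc u v) (hu : ¬ N.IsRetic u) : ∃ w, N.arc u w ∧ w ≠ v :=
  Set.exists_ne_of_one_lt_ncard (hwf.ncard_children_eq_two h hu ▸ one_lt_two) v

theorem root_desc (v : N.V) : N.Desc N.root v := by
  have : Finite N.V := hwf.1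
  induction v using (wellFounded_of_forall_not_transGen hwf.acyclic).induction with
  | _ v ih =>
    by_cases hv : v = N.root
    · exact hv ▸ .refl
    · obtain ⟨u, hu⟩ := hwf.exists_parent_of_ne_root hv
      exact (ih u hu).tail hu

theorem exists_desc_leaf (v : N.V) : ∃ x, N.Desc v (N.leaf x) := by
  have : Finite N.V := hwf.1
  have hac : ∀ v, ¬ Relation.TransGen (flip N.arc) v v :=
    fun v h => hwf.acyclic v (Relation.transGen_swap.mp h)
  induction v using (wellFounded_of_forall_not_transGen hac).induction with
  | _ v ih =>
    by_cases hv : ∀ x, N.leaf x ≠ v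
    · obtain ⟨w, hw⟩ := hwf.exists_child_of_forall_leaf_ne hv
      obtain ⟨x, hx⟩ := ih w hw
      exact ⟨x, .head hw hx⟩
    · obtain ⟨x, rfl⟩ := not_forall_not.mp hv
      exact ⟨x, .refl⟩

end Wf

theorem TreeChild.exists_child_not_isRetic (htc : N.TreeChild) (h : N.arc u v) :
    ∃ w, N.arc u w ∧ ¬ N.IsRetic w := by
  obtain ⟨w, hw, hwt⟩ := htc u ⟨v, h⟩
  have hw₁ : (N.parents w).ncard = 1 := hwt.elim (·.1) (·.1)
  exact ⟨w, hw, fun hr => absurd (hr.1.symm.trans hw₁) (by decide)⟩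

theorem TreeChild.not_isRetic_of_arc [Finite N.V] (htc : N.TreeChild) (h : N.arc u v)
    (hv : N.IsRetic v) : ¬ N.IsRetic u := fun hu => by
  obtain ⟨w, hw, hw'⟩ := htc.exists_child_not_isRetic h
  exact hw' (hu.eq_of_arc h hw ▸ hv)

theorem TreeChild.eq_of_arc_isRetic (hwf : N.Wf) (htc : N.TreeChild) {r₁ r₂ : N.V}
    (h₁ : N.arc u r₁) (hr₁ : N.IsRetic r₁) (h₂ : N.arc u r₂) (hr₂ : N.IsRetic r₂) :
    r₁ = r₂ := by
  have : Finite N.V := hwf.1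
  by_contra hne
  obtain ⟨w, hw, hw'⟩ := htc.exists_child_not_isRetic h₁
  have hsub : {r₁, r₂, w} ⊆ N.children u := by
    rintro _ (rfl | rfl | rfl) <;> assumption
  have hcard : ({r₁, r₂, w} : Set N.V).ncard = 3 :=
    Set.ncard_eq_three.mpr ⟨r₁, r₂, w, hne, by rintro rfl; exact hw' hr₁,
      by rintro rfl; exact hw' hr₂, rfl⟩
  have := Set.ncard_le_ncard hsub
  rw [hcard, hwf.ncard_children_eq_two h₁ (htc.not_isRetic_of_arc h₁ hr₁)] at this
  omega

theorem eq_of_desc_of_arc_isRetic (hac : N.Acyclic) (hns : ¬ N.HasShortcut) {r : N.V}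
    (hu : N.arc u r) (hv : N.arc v r) (hr : N.IsRetic r) (huv : N.Desc u v) : u = v := by
  obtain rfl | ⟨w, huw, hwv⟩ := huv.cases_head
  · rfl
  · have hwr : w ≠ r := by
      rintro rfl
      exact hac.not_desc_of_arc hv hwv
    exact absurd ⟨u, r, hu, hr, w, huw, hwr, hwv.tail hv⟩ hns

theorem exists_parent_not_desc_of_desc (hac : N.Acyclic) (hns : ¬ N.HasShortcut) {r : N.V}
    (hr : N.IsRetic r) (h : N.Desc w r) (hne : w ≠ r) : ∃ v, N.arc v r ∧ ¬ N.Desc v w := by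
  obtain rfl | ⟨m, hwm, hm⟩ := h.cases_tail
  · exact absurd rfl hne
  by_cases hmw : N.Desc m w
  · obtain ⟨v, hv, hvm⟩ := hr.exists_parent_ne m
    exact ⟨v, hv, fun hvw => hvm (eq_of_desc_of_arc_isRetic hac hns hv hm hr (hvw.trans hwm))⟩
  · exact ⟨m, hm, hmw⟩

theorem Displays.swap {x y z : X} (h : N.Displays x y z) : N.Displays y x z := by
  obtain ⟨hxy, hxz, hyz, p, q, l₀, lx, ly, lz, hpq, h₀, hx, hy, hz, hxy', h₀', hz'⟩ := h
  exact ⟨hxy.symm, hyz, hxz, p, q, l₀, ly, lx, lz, hpq, h₀, hy, hx, hz,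
    fun v hv hv' => hxy' v hv' hv, fun v hv hv' => h₀' v hv hv'.symm,
    fun v hv hv' => hz' v hv (by tauto)⟩

theorem Wf.not_displays_of_arc_of_arc (hwf : N.Wf) {x y z : X} (hx : N.arc w (N.leaf x))
    (hz : N.arc w (N.leaf z)) : ¬ N.Displays x y z := by
  rintro ⟨hxy, -, -, p, q, l₀, lx, ly, lz, hpq, h₀, hlx, hly, hlz, -, -, hlz'⟩
  have : Finite N.V := hwf.1
  have hqx : q ≠ N.leaf x := by
    rintro rfl
    exact hxy (hwf.2.2.2.2.1 (hwf.eq_of_desc_leaf hly.desc).symm)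
  have hpz : p ≠ N.leaf z := by
    rintro rfl
    exact hpq (hwf.eq_of_desc_leaf h₀.desc).symm
  obtain ⟨m, hm, hmx⟩ := hlx.exists_arc_mem hqx
  obtain ⟨m', hm', hmz⟩ := hlz.exists_arc_mem hpz
  rw [(hwf.isLeafVertex x).eq_of_arc hmx hx] at hm
  rw [(hwf.isLeafVertex z).eq_of_arc hmz hz] at hm'
  obtain rfl : w = p := hlz' w hm' (.inr (.inl hm))
  exact hpq (hwf.acyclic.antisymm h₀.desc (hlx.desc_of_mem hm).1)

theorem Wf.exists_displays_of_fork (hwf : N.Wf) {q d : N.V} {lx : List N.V} {x z : X}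
    (hlx : N.IsPathFromTo lx q (N.leaf x)) (hqd : N.arc q d) (hd : ∀ v ∈ lx, ¬ N.Desc d v)
    (hz : ¬ N.Desc q (N.leaf z)) : ∃ y, N.Displays x y z := by
  obtain ⟨y, hdy⟩ := hwf.exists_desc_leaf d
  obtain ⟨ld, hld⟩ := exists_isPathFromTo_of_desc hdy
  have hly := hld.cons hqd
  obtain ⟨p, l₀, lz, h₀, hlz, h₀z⟩ :=
    exists_branch_point (hwf.root_desc q) (hwf.root_desc (N.leaf z))
  refine ⟨y, ?_, ?_, ?_, p, q, l₀, lx, q :: ld, lz, ?_, h₀, hlx, hly, hlz, ?_, ?_, ?_⟩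
  · rintro rfl
    exact hd _ hlx.getLast_mem hdy
  · rintro rfl
    exact hz hlx.desc
  · rintro rfl
    exact hz hly.desc
  · rintro rfl
    exact hz hlz.desc
  · intro v hvx hvy
    rcases List.mem_cons.mp hvy with rfl | hv
    · rfl
    · exact absurd (hld.desc_of_mem hv).1 (hd v hvx)
  · rintro v hv₀ (hv | hv)
    · exact hwf.acyclic.antisymm (h₀.desc_of_mem hv₀).2 (hlx.desc_of_mem hv).1
    · exact hwf.acyclic.antisymm (h₀.desc_of_mem hv₀).2 (hly.desc_of_mem hv).1
  · rintro v hvz (hv₀ | hv | hv)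
    · exact h₀z v hv₀ hvz
    · exact absurd ((hlx.desc_of_mem hv).1.trans (hlz.desc_of_mem hvz).2) hz
    · exact absurd ((hly.desc_of_mem hv).1.trans (hlz.desc_of_mem hvz).2) hz

theorem Wf.exists_displays_of_not_isRetic (hwf : N.Wf) {p pz : N.V} {x z : X}
    (hp : N.arc p (N.leaf x)) (hpr : ¬ N.IsRetic p) (hpz : N.arc pz (N.leaf z))
    (hz : ¬ N.Desc p pz) : ∃ y, N.Displays x y z := by
  obtain ⟨d, hd, hdx⟩ := hwf.exists_child_ne hp hpr
  have hdp : ¬ N.Desc d p := hwf.acyclic.not_desc_of_arc hd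
  refine hwf.exists_displays_of_fork ((isPathFromTo_singleton _).cons hp) hd ?_
    fun h => hz (hwf.desc_of_desc_leaf hpz h (hwf.leaf_ne_of_arc hp).symm)
  intro v hv
  simp only [List.mem_cons, List.not_mem_nil, or_false] at hv
  rcases hv with rfl | rfl
  · exact hdp
  · exact fun h => hdp (hwf.desc_of_desc_leaf hp h hdx)

theorem Wf.exists_displays_of_isRetic (hwf : N.Wf) (htc : N.TreeChild) (hns : ¬ N.HasShortcut)
    {p pz : N.V} {x z : X} (hp : N.arc p (N.leaf x)) (hpr : N.IsRetic p) (hu : N.arc u p)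
    (hpz : N.arc pz (N.leaf z)) (hz : ¬ N.Desc u pz) : ∃ y, N.Displays x y z := by
  have : Finite N.V := hwf.1
  obtain ⟨d, hd, hdp⟩ := hwf.exists_child_ne hu (htc.not_isRetic_of_arc hu hpr)
  have hdp' : ¬ N.Desc d p := fun h => hns ⟨u, p, hu, hpr, d, hd, hdp, h⟩
  have hdx : d ≠ N.leaf x := by
    rintro rfl
    exact hwf.acyclic p (.single ((hwf.isLeafVertex x).eq_of_arc hd hp ▸ hu))
  refine hwf.exists_displays_of_fork (((isPathFromTo_singleton _).cons hp).cons hu) hd ?_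
    fun h => hz (hwf.desc_of_desc_leaf hpz h (hwf.leaf_ne_of_arc hu).symm)
  intro v hv
  simp only [List.mem_cons, List.not_mem_nil, or_false] at hv
  rcases hv with rfl | rfl | rfl
  · exact hwf.acyclic.not_desc_of_arc hd
  · exact hdp'
  · exact fun h => hdp' (hwf.desc_of_desc_leaf hp h hdx)

theorem Wf.exists_displays_of_parent_ne_of_not_isRetic (hwf : N.Wf) (htc : N.TreeChild)
    (hns : ¬ N.HasShortcut) {pa pb : N.V} {a b : X} (hpa : N.arc pa (N.leaf a))
    (hpb : N.arc pb (N.leaf b)) (hne : pa ≠ pb) (ha : ¬ N.IsRetic pa) :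
    ∃ c, N.Displays a c b ∨ N.Displays b c a := by
  by_cases hab : N.Desc pa pb
  swap
  · obtain ⟨c, hc⟩ := hwf.exists_displays_of_not_isRetic hpa ha hpb hab
    exact ⟨c, .inl hc⟩
  by_cases hb : N.IsRetic pb
  · obtain ⟨v, hv, hva⟩ := exists_parent_not_desc_of_desc hwf.acyclic hns hb hab hne
    obtain ⟨c, hc⟩ := hwf.exists_displays_of_isRetic htc hns hpb hb hv hpa hva
    exact ⟨c, .inr hc⟩
  · obtain ⟨c, hc⟩ := hwf.exists_displays_of_not_isRetic hpb hb hpa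
      fun hba => hne (hwf.acyclic.antisymm hab hba)
    exact ⟨c, .inr hc⟩

theorem Wf.exists_parent_not_desc_of_isRetic (hwf : N.Wf) (htc : N.TreeChild)
    (hns : ¬ N.HasShortcut) {pa pb : N.V} {a b : X} (hpa : N.arc pa (N.leaf a))
    (hpb : N.arc pb (N.leaf b)) (ha : N.IsRetic pa) (hb : N.IsRetic pb) (hne : pa ≠ pb) :
    (∃ u, N.arc u pa ∧ ¬ N.Desc u pb) ∨ (∃ v, N.arc v pb ∧ ¬ N.Desc v pa) := by
  have : Finite N.V := hwf.1
  by_contra! ⟨hpa_up, hpb_up⟩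
  obtain ⟨u, hu⟩ := Set.nonempty_of_ncard_ne_zero (ha.1.trans_ne two_ne_zero)
  -- `u` reaches `pb` through a parent `m` of `pb`, and `m` reaches `pa` through a parent of `pa`,
  -- which must be `u` itself; so `u` is a parent of both reticulations
  obtain rfl | ⟨m, hum, hm⟩ := (hpa_up u hu).cases_tail
  · exact hwf.not_arc_leaf b _ (hb.eq_of_arc hu hpb ▸ hpa)
  obtain rfl | ⟨m', hmm', hm'⟩ := (hpb_up m hm).cases_tail
  · exact hwf.not_arc_leaf a _ (ha.eq_of_arc hm hpa ▸ hpb)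
  obtain rfl : u = m' := eq_of_desc_of_arc_isRetic hwf.acyclic hns hu hm' ha (hum.trans hmm')
  obtain rfl : u = m := hwf.acyclic.antisymm hum hmm'
  exact hne (htc.eq_of_arc_isRetic hwf hu ha hm hb)

theorem Wf.exists_displays_of_parent_ne (hwf : N.Wf) (htc : N.TreeChild)
    (hns : ¬ N.HasShortcut) {pa pb : N.V} {a b : X} (hpa : N.arc pa (N.leaf a))
    (hpb : N.arc pb (N.leaf b)) (hne : pa ≠ pb) :
    ∃ c, N.Displays a c b ∨ N.Displays b c a := by
  by_cases ha : N.IsRetic pa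
  swap
  · exact hwf.exists_displays_of_parent_ne_of_not_isRetic htc hns hpa hpb hne ha
  by_cases hb : N.IsRetic pb
  swap
  · obtain ⟨c, hc⟩ := hwf.exists_displays_of_parent_ne_of_not_isRetic htc hns hpb hpa hne.symm hb
    exact ⟨c, hc.symm⟩
  rcases hwf.exists_parent_not_desc_of_isRetic htc hns hpa hpb ha hb hne with
    ⟨u, hu, hub⟩ | ⟨v, hv, hva⟩
  · obtain ⟨c, hc⟩ := hwf.exists_displays_of_isRetic htc hns hpa ha hu hpb hub
    exact ⟨c, .inl hc⟩
  · obtain ⟨c, hc⟩ := hwf.exists_displays_of_isRetic htc hns hpb hb hv hpa hva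
    exact ⟨c, .inr hc⟩

theorem Wf.pair_eq_of_cherry (hwf : N.Wf) {a b x y z : X} (hc : N.Cherry a b)
    (hd : N.Displays x y z) (ha : a ∈ ({x, y, z} : Set X)) (hb : b ∈ ({x, y, z} : Set X)) :
    ({a, b} : Set X) = {x, y} := by
  obtain ⟨hab, w, hwa, hwb⟩ := hc
  have hz : ∀ {u v}, N.arc w (N.leaf u) → N.arc w (N.leaf v) → u ∈ ({x, y} : Set X) →
      v ≠ z := by
    rintro u v hu hv (rfl | rfl) rfl
    exacts [hwf.not_displays_of_arc_of_arc hu hv hd,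
      hwf.not_displays_of_arc_of_arc hu hv hd.swap]
  simp only [Set.mem_insert_iff, Set.mem_singleton_iff] at ha hb hz
  rw [Set.pair_eq_pair_iff]
  grind

theorem Wf.cherry_of_forall_not_displays (hwf : N.Wf) (htc : N.TreeChild)
    (hns : ¬ N.HasShortcut) {a b : X} (hab : a ≠ b)
    (h : ∀ c, ¬ (N.Displays a c b ∨ N.Displays b c a)) : N.Cherry a b := by
  obtain ⟨pa, hpa⟩ := hwf.exists_parent_leaf a
  obtain ⟨pb, hpb⟩ := hwf.exists_parent_leaf b
  by_cases hne : pa = pb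
  · exact ⟨hab, pa, hpa, hne ▸ hpb⟩
  · obtain ⟨c, hc⟩ := hwf.exists_displays_of_parent_ne htc hns hpa hpb hne
    exact absurd hc (h c)

end Network

/-- Cherry recognition: in a binary normal network `N` on `X`, distinct leaves
`a, b` form a cherry if and only if every rooted triple `xy|z` displayed by `N`
with `a, b ∈ {x,y,z}` satisfies `{a,b} = {x,y}`. -/
theorem cherry_characterisation {X : Type} (N : Network X)
    (h : N.IsBinaryPhylo) (hn : N.IsNormal) (a b : X) (hab : a ≠ b) :
    N.Cherry a b ↔
      ∀ x y z : X, N.Displays x y z →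
        a ∈ ({x, y, z} : Set X) → b ∈ ({x, y, z} : Set X) →
        ({a, b} : Set X) = ({x, y} : Set X) := by
  obtain hwf | ⟨-, -, hX, -⟩ := h
  swap
  · exact absurd (hX.unique trivial trivial) hab
  refine ⟨fun hc x y z => hwf.pair_eq_of_cherry hc, fun H => ?_⟩
  refine hwf.cherry_of_forall_not_displays hn.1 hn.2 hab fun c hc => ?_
  rcases hc with hc | hc
  · have : ({a, b} : Set X) = {a, c} := H a c b hc (by simp) (by simp)
    exact hc.2.2.1 (by simpa [Set.pair_eq_pair_iff, hab.symm] using this : b = c).symm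
  · have : ({a, b} : Set X) = {b, c} := H b c a hc (by simp) (by simp)
    exact hc.2.2.1 (by simpa [Set.pair_eq_pair_iff, hab] using this : a = c).symm
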